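/- For every integer r and every non-negative integer n, 2·Σ_{j=0}^{n} (−1)^{rj} 4^j F_r^{2n−2j} 5^{n−j} = Σ_{j=0}^{n} (L_r²/2)^j (5^{n−j} F_r^{2(n−j)} + (−1)^{r(n−j)} 4^{n−j}) = 2·((5F_r²)^{n+1} − (−1)^{r(n+1)} 4^{n+1}) / (5F_r² − (−1)^r·4), where the denominator 5F_r² − (−1)^r·4 is nonzero for every integer r. -/
import Mathlib


open Finset

/-- Integer-indexed Fibonacci numbers: `fibZ n = F n`, with
`F (-n) = (-1)^(n+1) * F n`. -/
def fibZ (n : ℤ) : ℤ :=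
  if 0 ≤ n then (Nat.fib n.toNat : ℤ) else (-1) ^ (n.natAbs + 1) * (Nat.fib n.natAbs : ℤ)

/-- Integer-indexed Lucas numbers: `lucZ n = L n = F (n+1) + F (n-1)`. -/
def lucZ (n : ℤ) : ℤ := fibZ (n + 1) + fibZ (n - 1)

lemma fibZ_natCast (n : ℕ) : fibZ n = Nat.fib n := by
  simp [fibZ]

lemma fibZ_neg_natCast (n : ℕ) : fibZ (-(n : ℤ)) = (-1) ^ (n + 1) * Nat.fib n := by
  cases n with
  | zero => simp [fibZ]
  | succ m =>
    have h : ¬ (0 : ℤ) ≤ -((m + 1 : ℕ) : ℤ) := by omega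
    rw [fibZ, if_neg h]
    have habs : (-((m + 1 : ℕ) : ℤ)).natAbs = m + 1 := by
      omega
    rw [habs]

lemma cassiniZ (n : ℕ) :
    (Nat.fib (n + 1) : ℤ) ^ 2 - Nat.fib (n + 1) * Nat.fib n - (Nat.fib n : ℤ) ^ 2
      = (-1) ^ n := by
  induction n with
  | zero => simp
  | succ m ih =>
    have h := Nat.fib_add_two (n := m)
    push_cast [h]
    push_cast at ih
    linear_combination -ih

lemma lucZ_sq_nat (n : ℕ) :
    lucZ n ^ 2 = 5 * fibZ n ^ 2 + 4 * (-1) ^ n := by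
  cases n with
  | zero =>
    show lucZ 0 ^ 2 = 5 * fibZ 0 ^ 2 + 4 * (-1) ^ 0
    decide
  | succ m =>
    have e1 : ((m + 1 : ℕ) : ℤ) + 1 = ((m + 2 : ℕ) : ℤ) := by push_cast; ring
    have e2 : ((m + 1 : ℕ) : ℤ) - 1 = ((m : ℕ) : ℤ) := by push_cast; ring
    rw [lucZ, e1, e2, fibZ_natCast, fibZ_natCast, fibZ_natCast]
    have h := Nat.fib_add_two (n := m)
    have hc := cassiniZ m
    push_cast [h]
    have hpow : (-1 : ℤ) ^ (m + 1) = -(-1) ^ m := by ring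
    rw [hpow]
    linear_combination -4 * hc

lemma fibZ_neg_sq (n : ℕ) : fibZ (-(n : ℤ)) ^ 2 = fibZ n ^ 2 := by
  rw [fibZ_neg_natCast, fibZ_natCast, mul_pow, ← pow_mul]
  have : (-1 : ℤ) ^ ((n + 1) * 2) = 1 := by
    rw [mul_comm, pow_mul, neg_one_sq, one_pow]
  rw [this, one_mul]

lemma lucZ_neg (n : ℕ) : lucZ (-(n : ℤ)) = (-1) ^ n * lucZ n := by
  cases n with
  | zero => simp
  | succ m =>
    have e1 : -((m + 1 : ℕ) : ℤ) + 1 = -((m : ℕ) : ℤ) := by push_cast; ring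
    have e2 : -((m + 1 : ℕ) : ℤ) - 1 = -((m + 2 : ℕ) : ℤ) := by push_cast; ring
    have e3 : ((m + 1 : ℕ) : ℤ) + 1 = ((m + 2 : ℕ) : ℤ) := by push_cast; ring
    have e4 : ((m + 1 : ℕ) : ℤ) - 1 = ((m : ℕ) : ℤ) := by push_cast; ring
    rw [lucZ, lucZ, e1, e2, e3, e4, fibZ_neg_natCast, fibZ_neg_natCast,
      fibZ_natCast, fibZ_natCast]
    ring

lemma lucZ_neg_sq (n : ℕ) : lucZ (-(n : ℤ)) ^ 2 = lucZ n ^ 2 := by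
  rw [lucZ_neg, mul_pow, ← pow_mul]
  have : (-1 : ℤ) ^ (n * 2) = 1 := by rw [mul_comm, pow_mul, neg_one_sq, one_pow]
  rw [this, one_mul]

lemma lucZ_sq (r : ℤ) :
    (lucZ r : ℚ) ^ 2 = 5 * (fibZ r : ℚ) ^ 2 + 4 * (-1 : ℚ) ^ r := by
  obtain ⟨n, rfl | rfl⟩ := r.eq_nat_or_neg
  · have h := lucZ_sq_nat n
    rw [zpow_natCast]
    exact_mod_cast h
  · have hneg : ((-1 : ℚ)) ^ (-(n : ℤ)) = (-1 : ℚ) ^ n := by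
      rw [zpow_neg, zpow_natCast, ← inv_pow, inv_neg, inv_one]
    rw [hneg]
    have h2 : lucZ (-(n : ℤ)) ^ 2 = 5 * fibZ (-(n : ℤ)) ^ 2 + 4 * (-1) ^ n := by
      rw [lucZ_neg_sq, fibZ_neg_sq]; exact lucZ_sq_nat n
    exact_mod_cast h2

lemma denom_ne (r : ℤ) : 5 * (fibZ r : ℚ) ^ 2 - (-1 : ℚ) ^ r * 4 ≠ 0 := by
  set x : ℤ := fibZ r with hx
  rcases Int.even_or_odd r with he | ho
  · rw [Even.neg_one_zpow he]
    intro h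
    have hz : 5 * (x : ℚ) ^ 2 = 4 := by linarith
    have hz' : (5 : ℤ) * x ^ 2 = 4 := by exact_mod_cast hz
    have hd : (5 : ℤ) ∣ 4 := ⟨x ^ 2, hz'.symm⟩
    omega
  · rw [Odd.neg_one_zpow ho]
    intro h
    nlinarith [sq_nonneg ((x : ℚ))]

lemma geom_two (a b : ℚ) (hab : a - b ≠ 0) (n : ℕ) :
    2 * ∑ j ∈ Finset.range (n + 1), b ^ j * a ^ (n - j)
      = ∑ j ∈ Finset.range (n + 1), ((a + b) / 2) ^ j * (a ^ (n - j) + b ^ (n - j)) := by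
  have h1 := geom_sum₂_mul b a (n + 1)
  have h2 := geom_sum₂_mul ((a + b) / 2) a (n + 1)
  have h3 := geom_sum₂_mul ((a + b) / 2) b (n + 1)
  simp only [Nat.add_sub_cancel] at h1 h2 h3
  have split : ∑ j ∈ Finset.range (n + 1), ((a + b) / 2) ^ j * (a ^ (n - j) + b ^ (n - j))
      = (∑ j ∈ Finset.range (n + 1), ((a + b) / 2) ^ j * a ^ (n - j))
        + ∑ j ∈ Finset.range (n + 1), ((a + b) / 2) ^ j * b ^ (n - j) := by
    rw [← Finset.sum_add_distrib]
    exact Finset.sum_congr rfl fun j _ => by ring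
  rw [split]
  apply mul_right_cancel₀ hab
  linear_combination (-2 : ℚ) * h1 + 2 * h2 - 2 * h3

lemma geom_closed (a b : ℚ) (hab : a - b ≠ 0) (n : ℕ) :
    2 * ∑ j ∈ Finset.range (n + 1), b ^ j * a ^ (n - j)
      = 2 * (a ^ (n + 1) - b ^ (n + 1)) / (a - b) := by
  have h1 := geom_sum₂_mul b a (n + 1)
  simp only [Nat.add_sub_cancel] at h1
  rw [eq_div_iff hab]
  linear_combination (-2 : ℚ) * h1

theorem thm6_sums (r : ℤ) (n : ℕ) :
    (2 * ∑ j ∈ Finset.range (n + 1),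
        (-1 : ℚ) ^ (r * (j : ℤ)) * 4 ^ j * (fibZ r : ℚ) ^ (2 * n - 2 * j) * 5 ^ (n - j)
      = ∑ j ∈ Finset.range (n + 1),
        ((lucZ r : ℚ) ^ 2 / 2) ^ j
          * (5 ^ (n - j) * (fibZ r : ℚ) ^ (2 * (n - j))
            + (-1 : ℚ) ^ (r * ((n : ℤ) - j)) * 4 ^ (n - j))) ∧
    (2 * ∑ j ∈ Finset.range (n + 1),
        (-1 : ℚ) ^ (r * (j : ℤ)) * 4 ^ j * (fibZ r : ℚ) ^ (2 * n - 2 * j) * 5 ^ (n - j)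
      = 2 * ((5 * (fibZ r : ℚ) ^ 2) ^ (n + 1) - (-1 : ℚ) ^ (r * ((n : ℤ) + 1)) * 4 ^ (n + 1))
          / (5 * (fibZ r : ℚ) ^ 2 - (-1 : ℚ) ^ r * 4)) ∧
    (5 * (fibZ r : ℚ) ^ 2 - (-1 : ℚ) ^ r * 4 ≠ 0) := by
  set F : ℚ := (fibZ r : ℚ) with hF
  set a : ℚ := 5 * F ^ 2 with ha
  set b : ℚ := (-1 : ℚ) ^ r * 4 with hb
  have hab : a - b ≠ 0 := denom_ne r
  have hLuc : (lucZ r : ℚ) ^ 2 = a + b := by rw [lucZ_sq r, ha, hb]; ring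
  have e1 : ∑ j ∈ Finset.range (n + 1),
      (-1 : ℚ) ^ (r * (j : ℤ)) * 4 ^ j * F ^ (2 * n - 2 * j) * 5 ^ (n - j)
      = ∑ j ∈ Finset.range (n + 1), b ^ j * a ^ (n - j) := by
    refine Finset.sum_congr rfl fun j hj => ?_
    have hjn : j ≤ n := by
      have := Finset.mem_range.mp hj; omega
    have h2 : 2 * n - 2 * j = 2 * (n - j) := by omega
    have hz : (-1 : ℚ) ^ (r * (j : ℤ)) = ((-1 : ℚ) ^ r) ^ j := by
      rw [zpow_mul, zpow_natCast]
    rw [hz, h2, ha, hb]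
    ring
  have e2 : ∑ j ∈ Finset.range (n + 1),
      ((lucZ r : ℚ) ^ 2 / 2) ^ j
        * (5 ^ (n - j) * F ^ (2 * (n - j)) + (-1 : ℚ) ^ (r * ((n : ℤ) - j)) * 4 ^ (n - j))
      = ∑ j ∈ Finset.range (n + 1), ((a + b) / 2) ^ j * (a ^ (n - j) + b ^ (n - j)) := by
    refine Finset.sum_congr rfl fun j hj => ?_
    have hjn : j ≤ n := by
      have := Finset.mem_range.mp hj; omega
    have hcast : (n : ℤ) - j = ((n - j : ℕ) : ℤ) := by
      push_cast [hjn]; ring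
    have hz : (-1 : ℚ) ^ (r * ((n : ℤ) - j)) = ((-1 : ℚ) ^ r) ^ (n - j) := by
      rw [hcast, zpow_mul, zpow_natCast]
    rw [hz, hLuc, ha, hb]
    ring
  have hbpow : (-1 : ℚ) ^ (r * ((n : ℤ) + 1)) * 4 ^ (n + 1) = b ^ (n + 1) := by
    have hcast : (n : ℤ) + 1 = ((n + 1 : ℕ) : ℤ) := by push_cast; ring
    rw [hcast, zpow_mul, zpow_natCast, hb, mul_pow]
  refine ⟨?_, ?_, hab⟩
  · rw [e1, e2]
    exact geom_two a b hab n
  · rw [e1, hbpow]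
    exact geom_closed a b hab n
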